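/- arXiv:1502.05185 — 4 statements merged into one kernel-verified Lean document; each statement's English description precedes it below -/
import Mathlib

section
/- Let E ⊆ ℝ^d be compact and H : E × ℝ^d → ℝ continuous, convex in p, with H(x,0) = 0 for all x. Define the Lagrangian L(x,v) = sup_{p∈ℝ^d} (⟨p,v⟩ − H(x,p)). Then for every c ≥ 0 the sublevel set {(x,v) ∈ E × ℝ^d : L(x,v) ≤ c} is compact. -/
open Set Filter Topology

/-! Since `H` is continuous and vanishes on the compact set `E × {0}`, it stays below `1` on
`E × B(0, ε)` for some `ε > 0`. A point `(x, v)` of the sublevel set then satisfies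
`⟨p, v⟩ ≤ c + H(x, p) < c + 1` for all `|p| < ε`, so `|v| ≤ 2(c + 1)/ε`. The sublevel set is
also closed, being cut out of the closed set `E × ℝ^d` by the conditions
`⟨p, v⟩ - H(x, p) ≤ c`, `p ∈ ℝ^d`, each of which is relatively closed. -/

theorem IsCompact.eventually_forall_lt_of_continuousOn {X V : Type*} [TopologicalSpace X]
    [TopologicalSpace V] {E : Set X} (hE : IsCompact E) {H : X → V → ℝ}
    (hH : ContinuousOn (fun q : X × V => H q.1 q.2) (E ×ˢ univ)) {p₀ : V} {a : ℝ}
    (ha : ∀ x ∈ E, H x p₀ < a) : ∀ᶠ p in 𝓝 p₀, ∀ x ∈ E, H x p < a := by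
  have hnear : ∀ x ∈ E, ∀ᶠ z : V × X in 𝓝 (p₀, x), z.2 ∈ E → H z.2 z.1 < a := fun x hx => by
    have hlt := eventually_nhdsWithin_iff.1
      ((hH (x, p₀) ⟨hx, mem_univ _⟩).eventually_lt_const (ha x hx))
    filter_upwards [(continuous_swap.tendsto (p₀, x)).eventually hlt] with z hz hzE
    exact hz ⟨hzE, mem_univ _⟩
  filter_upwards [hE.eventually_forall_of_forall_eventually (P := fun p x => x ∈ E → H x p < a)
    hnear] with p hp x hx
  exact hp x hx hx

theorem norm_le_of_forall_dotProduct_le {n : Type*} [Fintype n] {v : n → ℝ} {ε C : ℝ}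
    (hε : 0 < ε) (h : ∀ p : n → ℝ, ‖p‖ < ε → p ⬝ᵥ v ≤ C) : ‖v‖ ≤ 2 * C / ε := by
  have hC : 0 ≤ C := by simpa using h 0 (by simpa using hε)
  refine (pi_norm_le_iff_of_nonneg (by positivity)).2 fun i => ?_
  have hsingle : ∀ a : ℝ, |a| < ε → a * v i ≤ C := fun a ha => by
    classical
    simpa using h (Pi.single i a) (by rwa [Pi.norm_single, Real.norm_eq_abs])
  have hpos := hsingle (ε / 2) (by rw [abs_of_pos (by positivity)]; linarith)
  have hneg := hsingle (-(ε / 2)) (by rw [abs_neg, abs_of_pos (by positivity)]; linarith)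
  rw [Real.norm_eq_abs, le_div_iff₀ hε, ← abs_of_pos hε, ← abs_mul, abs_le]
  constructor <;> linarith

theorem isClosed_setOf_mem_and_forall_le {X ι : Type*} [TopologicalSpace X] {s : Set X}
    (hs : IsClosed s) {f : ι → X → ℝ} (hf : ∀ i, ContinuousOn (f i) s) (c : ℝ) :
    IsClosed {x | x ∈ s ∧ ∀ i, f i x ≤ c} := by
  have hset : {x | x ∈ s ∧ ∀ i, f i x ≤ c} = s ∩ ⋂ i, s ∩ f i ⁻¹' Iic c := by
    ext x
    simp only [mem_ofPred_eq, mem_inter_iff, mem_iInter, mem_preimage, mem_Iic]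
    exact ⟨fun h => ⟨h.1, fun i => ⟨h.1, h.2 i⟩⟩, fun h => ⟨h.1, fun i => (h.2 i).2⟩⟩
  rw [hset]
  exact hs.inter (isClosed_iInter fun i => (hf i).preimage_isClosed_of_isClosed hs isClosed_Iic)

theorem stmt_3_general {d : ℕ} (E : Set (Fin d → ℝ)) (hEc : IsCompact E)
    (H : (Fin d → ℝ) → (Fin d → ℝ) → ℝ)
    (hHcont : ContinuousOn (fun q : (Fin d → ℝ) × (Fin d → ℝ) => H q.1 q.2)
      (E ×ˢ Set.univ))
    (hH0 : ∀ x ∈ E, H x 0 = 0)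
    (L : (Fin d → ℝ) → (Fin d → ℝ) → EReal)
    (hL : ∀ x v, L x v = ⨆ p : Fin d → ℝ, ((∑ i, p i * v i - H x p : ℝ) : EReal)) :
    ∀ c : ℝ, 0 ≤ c →
      IsCompact {q : (Fin d → ℝ) × (Fin d → ℝ) | q.1 ∈ E ∧ L q.1 q.2 ≤ (c : EReal)} := by
  intro c _
  obtain ⟨ε, hε, hεH⟩ : ∃ ε > 0, ∀ p : Fin d → ℝ, dist p 0 < ε → ∀ x ∈ E, H x p < 1 :=
    Metric.eventually_nhds_iff.1 <|
      hEc.eventually_forall_lt_of_continuousOn hHcont fun x hx => by simp [hH0 x hx]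
  have hsublevel : {q : (Fin d → ℝ) × (Fin d → ℝ) | q.1 ∈ E ∧ L q.1 q.2 ≤ (c : EReal)} =
      {q | q ∈ E ×ˢ univ ∧ ∀ p, p ⬝ᵥ q.2 - H q.1 p ≤ c} := by
    ext q
    simp only [mem_ofPred_eq, mem_prod, mem_univ, and_true, hL, iSup_le_iff,
      EReal.coe_le_coe_iff, dotProduct]
  rw [hsublevel]
  refine (hEc.prod (isCompact_closedBall 0 (2 * (c + 1) / ε))).of_isClosed_subset
    (isClosed_setOf_mem_and_forall_le (hEc.isClosed.prod isClosed_univ) (fun p => ?_) c) ?_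
  · exact ((continuous_const.dotProduct continuous_snd).continuousOn).sub
      (hHcont.comp (continuous_fst.prodMk continuous_const).continuousOn
        fun q hq => ⟨hq.1, mem_univ _⟩)
  · rintro ⟨x, v⟩ ⟨⟨hx, -⟩, hv⟩
    refine ⟨hx, mem_closedBall_zero_iff.2 (norm_le_of_forall_dotProduct_le hε fun p hp => ?_)⟩
    linarith [hv p, hεH p (by rwa [dist_zero_right]) x hx]

/-- For `E ⊆ ℝ^d` compact nonempty and `H : E × ℝ^d → ℝ` jointly continuous, convex in
the second variable with `H(x,0) = 0`, the sublevel sets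
`{(x,v) : x ∈ E, L(x,v) ≤ c}` of the Lagrangian
`L(x,v) = sup_p (⟨p,v⟩ − H(x,p))` are compact. -/
theorem stmt_3 {d : ℕ} (E : Set (Fin d → ℝ)) (hEc : IsCompact E) (hEne : E.Nonempty)
    (H : (Fin d → ℝ) → (Fin d → ℝ) → ℝ)
    (hHcont : ContinuousOn (fun q : (Fin d → ℝ) × (Fin d → ℝ) => H q.1 q.2)
      (E ×ˢ Set.univ))
    (hHconv : ∀ x ∈ E, ConvexOn ℝ Set.univ (H x))
    (hH0 : ∀ x ∈ E, H x 0 = 0)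
    (L : (Fin d → ℝ) → (Fin d → ℝ) → EReal)
    (hL : ∀ x v, L x v = ⨆ p : Fin d → ℝ, ((∑ i, p i * v i - H x p : ℝ) : EReal)) :
    ∀ c : ℝ, 0 ≤ c →
      IsCompact {q : (Fin d → ℝ) × (Fin d → ℝ) | q.1 ∈ E ∧ L q.1 q.2 ≤ (c : EReal)} :=
  stmt_3_general E hEc H hHcont hH0 L hL
end

section
/- Let E ⊆ ℝ^d be compact, B : E × ℝ^d → ℝ continuous, λ > 0, h ∈ C(E). Let v : E → ℝ be a bounded lower semicontinuous viscosity supersolution of f(x) − λ B(x, ∇f(x)) − h(x) = 0. Let Ψ be a good distance function and suppose (x_α, y_α) maximizes (x,y) ↦ u(x) − v(y) − αΨ(x,y) over E² (with u bounded and upper semicontinuous). Then sup_α B(y_α, α (∇_x Ψ)(x_α, y_α)) ≤ (‖v‖_∞ + ‖h‖_∞)/λ < ∞. -/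
/-! The section `y ↦ u(x_α) − αΨ(x_α, y)` of the penalised functional is a C¹ test function
touching `v` from below at `y_α`, and by `∇_y Ψ = −∇_x Ψ` its gradient there is
`α ∇_x Ψ(x_α, y_α)`. The supersolution inequality at `y_α` then gives
`λ B(y_α, α ∇_x Ψ(x_α, y_α)) ≤ v(y_α) − h(y_α) ≤ ‖v‖_∞ + ‖h‖_∞`. -/

section

variable {ι : Type*} [Fintype ι] [DecidableEq ι]

noncomputable def partialDerivs (f : (ι → ℝ) → ℝ) (x : ι → ℝ) : ι → ℝ :=
  fun i => fderiv ℝ f x (Pi.single i 1)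

def IsViscositySupersolution (E : Set (ι → ℝ)) (lam : ℝ) (B : (ι → ℝ) → (ι → ℝ) → ℝ)
    (h v : (ι → ℝ) → ℝ) : Prop :=
  ∀ f : (ι → ℝ) → ℝ, ContDiff ℝ 1 f → ∀ x ∈ E,
    IsMinOn (fun y => v y - f y) E x → 0 ≤ v x - lam * B x (partialDerivs f x) - h x

theorem partialDerivs_const_sub_mul {φ : (ι → ℝ) → ℝ} {x : ι → ℝ}
    (hφ : DifferentiableAt ℝ φ x) (c a : ℝ) :
    partialDerivs (fun z => c - a * φ z) x = fun i => -(a * partialDerivs φ x i) := by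
  funext i
  simp only [partialDerivs, fderiv_const_sub, fderiv_const_mul hφ,
    neg_apply, smul_apply, smul_eq_mul]

theorem le_add_div_of_nonneg_sub_mul_sub {lam b v h Cv Ch : ℝ} (hlam : 0 < lam)
    (hv : |v| ≤ Cv) (hh : |h| ≤ Ch) (H : 0 ≤ v - lam * b - h) : b ≤ (Cv + Ch) / lam := by
  rw [le_div_iff₀ hlam]
  linarith [le_abs_self v, neg_abs_le h]

theorem IsViscositySupersolution.le_of_isMinOn {E : Set (ι → ℝ)} {lam : ℝ}
    {B : (ι → ℝ) → (ι → ℝ) → ℝ} {h v f : (ι → ℝ) → ℝ} {Cv Ch : ℝ} {x : ι → ℝ}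
    (hv_super : IsViscositySupersolution E lam B h v) (hlam : 0 < lam)
    (hvb : ∀ x ∈ E, |v x| ≤ Cv) (hhb : ∀ x ∈ E, |h x| ≤ Ch)
    (hf : ContDiff ℝ 1 f) (hx : x ∈ E) (hmin : IsMinOn (fun y => v y - f y) E x) :
    B x (partialDerivs f x) ≤ (Cv + Ch) / lam :=
  le_add_div_of_nonneg_sub_mul_sub hlam (hvb x hx) (hhb x hx) (hv_super f hf x hx hmin)

end

theorem stmt_8_general {d : ℕ} (E : Set (Fin d → ℝ))
    (B : (Fin d → ℝ) → (Fin d → ℝ) → ℝ)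
    (lam : ℝ) (hlam : 0 < lam) (h : (Fin d → ℝ) → ℝ)
    (u v : (Fin d → ℝ) → ℝ)
    (Cv Ch : ℝ)
    (hvb : ∀ x ∈ E, |v x| ≤ Cv) (hhb : ∀ x ∈ E, |h x| ≤ Ch)
    -- v is a viscosity supersolution: for every C¹ test function f and interior
    -- minimum point x of v − f over E, we have v(x) − λ B(x, ∇f(x)) − h(x) ≥ 0.
    (hv_super : ∀ f : (Fin d → ℝ) → ℝ, ContDiff ℝ 1 f → ∀ x ∈ E,
      IsMinOn (fun y => v y - f y) E x →
      0 ≤ v x - lam * B x (fun i => fderiv ℝ f x (Pi.single i 1)) - h x)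
    -- Ψ is a good distance function with gradient G in the first component:
    (Ψ : (Fin d → ℝ) → (Fin d → ℝ) → ℝ) (G : (Fin d → ℝ) → (Fin d → ℝ) → (Fin d → ℝ))
    (hΨC1y : ∀ x, ContDiff ℝ 1 (fun y => Ψ x y))
    (hGy : ∀ x y i, fderiv ℝ (fun y' => Ψ x y') y (Pi.single i 1) = -(G x y i))
    (x y : ℝ → (Fin d → ℝ))
    (hmem : ∀ α > (0:ℝ), x α ∈ E ∧ y α ∈ E)
    (hmax : ∀ α > (0:ℝ), ∀ x' ∈ E, ∀ y' ∈ E,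
      u x' - v y' - α * Ψ x' y' ≤ u (x α) - v (y α) - α * Ψ (x α) (y α)) :
    ∀ α > (0:ℝ), B (y α) (fun i => α * G (x α) (y α) i) ≤ (Cv + Ch) / lam := by
  intro α hα
  obtain ⟨hxE, hyE⟩ := hmem α hα
  set f : (Fin d → ℝ) → ℝ := fun y' => u (x α) - α * Ψ (x α) y'
  have hf : ContDiff ℝ 1 f := contDiff_const.sub (contDiff_const.mul (hΨC1y (x α)))
  have hmin : IsMinOn (fun y' => v y' - f y') E (y α) := fun y' hy' => by
    simp only [Set.mem_ofPred_eq, f]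
    linarith [hmax α hα (x α) hxE y' hy']
  have hgrad : partialDerivs f (y α) = fun i => α * G (x α) (y α) i := by
    rw [partialDerivs_const_sub_mul ((hΨC1y (x α)).differentiable one_ne_zero _)]
    simp only [partialDerivs, hGy, mul_neg, neg_neg]
  rw [← hgrad]
  exact IsViscositySupersolution.le_of_isMinOn hv_super hlam hvb hhb hf hyE hmin

/-- Control on the Hamiltonian along a supersolution (Lemma 9.3 in Feng–Kurtz):
if `v` is a bounded lsc viscosity supersolution of `f − λB(·,∇f) − h = 0` on a compact
`E ⊆ ℝ^d`, `Ψ` a good distance function with first-component gradient `G`, and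
`(x α, y α)` maximises `u(x) − v(y) − αΨ(x,y)` over `E²`, then
`B(y α, α ∇_xΨ(x α, y α)) ≤ (‖v‖_∞ + ‖h‖_∞)/λ` for all `α > 0`. -/
theorem stmt_8 {d : ℕ} (E : Set (Fin d → ℝ)) (hEc : IsCompact E) (hEne : E.Nonempty)
    (B : (Fin d → ℝ) → (Fin d → ℝ) → ℝ)
    (hBcont : Continuous fun q : (Fin d → ℝ) × (Fin d → ℝ) => B q.1 q.2)
    (lam : ℝ) (hlam : 0 < lam) (h : (Fin d → ℝ) → ℝ) (hh : ContinuousOn h E)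
    (u v : (Fin d → ℝ) → ℝ)
    (hu_usc : UpperSemicontinuousOn u E) (hv_lsc : LowerSemicontinuousOn v E)
    (Cu Cv Ch : ℝ)
    (hub : ∀ x ∈ E, |u x| ≤ Cu) (hvb : ∀ x ∈ E, |v x| ≤ Cv) (hhb : ∀ x ∈ E, |h x| ≤ Ch)
    -- v is a viscosity supersolution: for every C¹ test function f and interior
    -- minimum point x of v − f over E, we have v(x) − λ B(x, ∇f(x)) − h(x) ≥ 0.
    (hv_super : ∀ f : (Fin d → ℝ) → ℝ, ContDiff ℝ 1 f → ∀ x ∈ E,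
      IsMinOn (fun y => v y - f y) E x →
      0 ≤ v x - lam * B x (fun i => fderiv ℝ f x (Pi.single i 1)) - h x)
    -- Ψ is a good distance function with gradient G in the first component:
    (Ψ : (Fin d → ℝ) → (Fin d → ℝ) → ℝ) (G : (Fin d → ℝ) → (Fin d → ℝ) → (Fin d → ℝ))
    (hΨpos : ∀ x y, 0 ≤ Ψ x y) (hΨ0 : ∀ x y, Ψ x y = 0 → x = y)
    (hΨC1x : ∀ y, ContDiff ℝ 1 (fun x => Ψ x y))
    (hΨC1y : ∀ x, ContDiff ℝ 1 (fun y => Ψ x y))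
    (hGx : ∀ x y i, fderiv ℝ (fun x' => Ψ x' y) x (Pi.single i 1) = G x y i)
    (hGy : ∀ x y i, fderiv ℝ (fun y' => Ψ x y') y (Pi.single i 1) = -(G x y i))
    (x y : ℝ → (Fin d → ℝ))
    (hmem : ∀ α > (0:ℝ), x α ∈ E ∧ y α ∈ E)
    (hmax : ∀ α > (0:ℝ), ∀ x' ∈ E, ∀ y' ∈ E,
      u x' - v y' - α * Ψ x' y' ≤ u (x α) - v (y α) - α * Ψ (x α) (y α)) :
    ∀ α > (0:ℝ), B (y α) (fun i => α * G (x α) (y α) i) ≤ (Cv + Ch) / lam :=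
  stmt_8_general E B lam hlam h u v Cv Ch hvb hhb hv_super Ψ G hΨC1y hGy x y hmem hmax
end

section
/- Let v : [-1,1] → [0,∞) be continuous with v(x) = v_†(x) v_‡(x) on a neighbourhood U of −1, where v_† is increasing and v_‡ is continuous with v_‡(−1) ≠ 0, and v(y) > 0 for y ∈ U with y > −1. Let x_k ≤ y_k be sequences in U converging to −1 and c_k → ∞ with u_k := v(y_k)(e^{c_k} − 1) bounded. Then liminf_k [v(x_k) − v(y_k)](e^{c_k} − 1) ≤ 0. -/
/-!
Since `u_k = v(y_k)(e^{c_k} - 1)` is bounded while `e^{c_k} → ∞`, continuity forces `v(-1) = 0`,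
hence `v_†(-1) = 0`; as `v_† ≥ 0` to the right of `-1` and `v > 0` there, `v_‡(-1) > 0`.
Monotonicity of `v_†` and positivity of `v_‡` near `-1` then give
`[v(x_k) - v(y_k)](e^{c_k} - 1) ≤ (v_‡(x_k)/v_‡(y_k) - 1) u_k`,
a null sequence times a bounded one.
-/

open Real Filter Topology

theorem tendsto_zero_of_mul_le_of_tendsto_atTop {ι : Type*} {l : Filter ι} {a E : ι → ℝ}
    {M : ℝ} (ha : ∀ᶠ k in l, 0 ≤ a k) (hM : ∀ᶠ k in l, a k * E k ≤ M)
    (hE : Tendsto E l atTop) : Tendsto a l (𝓝 0) := by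
  refine squeeze_zero' ha ?_ ((tendsto_const_nhds (x := M)).div_atTop hE)
  filter_upwards [hM, hE.eventually_gt_atTop 0] with k hk hEk
  exact (le_div_iff₀ hEk).2 hk

/-- The hypothesis `0 ≤ c` covers the case of `u` unbounded below, where `liminf u l = sSup ∅ = 0`
in `ℝ`. -/
theorem Real.liminf_le_of_eventually_le_of_tendsto {ι : Type*} {l : Filter ι} [l.NeBot]
    {u b : ι → ℝ} {c : ℝ} (hub : u ≤ᶠ[l] b) (hb : Tendsto b l (𝓝 c)) (hc : 0 ≤ c) :
    liminf u l ≤ c := by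
  rw [liminf_eq]
  refine Real.sSup_le (fun a ha => ge_of_tendsto hb ?_) hc
  filter_upwards [ha, hub] with k hak hk
  exact hak.trans hk

theorem pos_of_monotoneOn_mul_pos {f g : ℝ → ℝ} {U : Set ℝ} {a : ℝ} (hU : U ∈ 𝓝[≥] a)
    (hf : MonotoneOn f U) (hfa : f a = 0) (hg : ContinuousWithinAt g U a) (hga : g a ≠ 0)
    (hpos : ∀ z ∈ U, a < z → 0 < f z * g z) : 0 < g a := by
  refine hga.lt_or_gt.resolve_left fun hneg => ?_
  have haU : a ∈ U := mem_of_mem_nhdsWithin Set.self_mem_Ici hU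
  have hU' : U ∈ 𝓝[>] a := nhdsWithin_mono a Set.Ioi_subset_Ici_self hU
  have hg_neg : ∀ᶠ z in 𝓝[>] a, g z < 0 :=
    nhdsWithin_le_of_mem hU' (hg.eventually (gt_mem_nhds hneg))
  obtain ⟨z, hgz, hzU, haz⟩ :=
    (hg_neg.and (Filter.Eventually.and hU' self_mem_nhdsWithin)).exists
  have hfz : 0 ≤ f z := hfa ▸ hf haU hzU haz.le
  exact (hpos z hzU haz).not_ge (mul_nonpos_of_nonneg_of_nonpos hfz hgz.le)

theorem sub_mul_le_div_sub_one_mul {p p' q q' E : ℝ} (hp : p ≤ p') (hq : 0 ≤ q)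
    (hq' : q' ≠ 0) (hE : 0 ≤ E) :
    (p * q - p' * q') * E ≤ (q / q' - 1) * (p' * q' * E) := by
  calc (p * q - p' * q') * E ≤ (p' * q - p' * q') * E := by gcongr
    _ = (q / q' - 1) * (p' * q' * E) := by field_simp

/-- The decomposition argument in the comparison principle proof: with
`v = v_† · v_‡` on a neighbourhood `U` of `−1` in `[-1,1]`, `v_†` increasing, `v_‡`
continuous and nonvanishing at `−1`, `v > 0` on `U ∩ (−1,∞)`, sequences
`x_k ≤ y_k → −1` in `U`, `c_k → ∞` with `u_k = v(y_k)(e^{c_k} − 1)` bounded, one has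
`liminf_k [v(x_k) − v(y_k)](e^{c_k} − 1) ≤ 0`. -/
theorem stmt_12 (v vd vdd : ℝ → ℝ) (U : Set ℝ)
    (hU : U ∈ nhdsWithin (-1:ℝ) (Set.Icc (-1:ℝ) 1)) (hUsub : U ⊆ Set.Icc (-1:ℝ) 1)
    (hvc : ContinuousOn v (Set.Icc (-1) 1))
    (hv0 : ∀ x ∈ Set.Icc (-1:ℝ) 1, 0 ≤ v x)
    (hdec : ∀ x ∈ U, v x = vd x * vdd x)
    (hvd : MonotoneOn vd U) (hvdd : ContinuousOn vdd U) (hvdd1 : vdd (-1) ≠ 0)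
    (hpos : ∀ y ∈ U, -1 < y → 0 < v y)
    (x y : ℕ → ℝ) (c : ℕ → ℝ)
    (hxU : ∀ k, x k ∈ U) (hyU : ∀ k, y k ∈ U) (hxy : ∀ k, x k ≤ y k)
    (hxlim : Tendsto x atTop (𝓝 (-1))) (hylim : Tendsto y atTop (𝓝 (-1)))
    (hc : Tendsto c atTop atTop)
    (hbd : ∃ M : ℝ, ∀ k, v (y k) * (exp (c k) - 1) ≤ M) :
    Filter.liminf (fun k => (v (x k) - v (y k)) * (exp (c k) - 1)) atTop ≤ 0 := by
  obtain ⟨M, hM⟩ := hbd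
  have hU' : U ∈ 𝓝[≥] (-1:ℝ) := by rwa [← nhdsWithin_Icc_eq_nhdsGE (by norm_num : (-1:ℝ) < 1)]
  have h1U : (-1:ℝ) ∈ U := mem_of_mem_nhdsWithin Set.self_mem_Ici hU'
  have hE : Tendsto (fun k => exp (c k) - 1) atTop atTop :=
    tendsto_atTop_add_const_right _ _ (tendsto_exp_atTop.comp hc)
  have hu0 : ∀ᶠ k in atTop, 0 ≤ v (y k) * (exp (c k) - 1) := by
    filter_upwards [hE.eventually_ge_atTop 0] with k hk
    exact mul_nonneg (hv0 _ (hUsub (hyU k))) hk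
  have hv1 : v (-1) = 0 := by
    refine tendsto_nhds_unique ((hvc _ (hUsub h1U)).tendsto.comp ?_)
      (tendsto_zero_of_mul_le_of_tendsto_atTop (.of_forall fun k => hv0 _ (hUsub (hyU k)))
        (.of_forall hM) hE)
    exact tendsto_nhdsWithin_iff.2 ⟨hylim, .of_forall fun k => hUsub (hyU k)⟩
  have hvd1 : vd (-1) = 0 := by simpa [hvdd1] using (hdec _ h1U).symm.trans hv1
  have hvdd_pos : 0 < vdd (-1) :=
    pos_of_monotoneOn_mul_pos hU' hvd hvd1 (hvdd _ h1U) hvdd1 fun z hz hz1 =>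
      hdec z hz ▸ hpos z hz hz1
  have hvdd_lim : ∀ z : ℕ → ℝ, (∀ k, z k ∈ U) → Tendsto z atTop (𝓝 (-1)) →
      Tendsto (fun k => vdd (z k)) atTop (𝓝 (vdd (-1))) := fun z hzU hz =>
    (hvdd _ h1U).tendsto.comp (tendsto_nhdsWithin_iff.2 ⟨hz, .of_forall hzU⟩)
  have hratio : Tendsto (fun k => vdd (x k) / vdd (y k) - 1) atTop (𝓝 0) := by
    simpa [div_self hvdd1] using
      ((hvdd_lim x hxU hxlim).div (hvdd_lim y hyU hylim) hvdd1).sub_const 1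
  have hu_bdd : IsBoundedUnder (· ≤ ·) atTop
      ((‖·‖) ∘ fun k => v (y k) * (exp (c k) - 1)) := by
    refine ⟨M, eventually_map.2 ?_⟩
    filter_upwards [hu0] with k hk
    simpa [abs_of_nonneg hk] using hM k
  refine Real.liminf_le_of_eventually_le_of_tendsto ?_
    (hratio.zero_mul_isBoundedUnder_le hu_bdd) le_rfl
  filter_upwards [hE.eventually_ge_atTop 0,
    (hvdd_lim x hxU hxlim).eventually (lt_mem_nhds hvdd_pos),
    (hvdd_lim y hyU hylim).eventually_ne hvdd1] with k hEk hxk hyk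
  have key := sub_mul_le_div_sub_one_mul (hvd (hxU k) (hyU k) (hxy k)) hxk.le hyk hEk
  rwa [← hdec _ (hxU k), ← hdec _ (hyU k)] at key
end

section
/- Let E = [-1,1]^d, and for f ∈ C¹(E) define H_n f(x) = ∑_{i=1}^d { ((1−x_i)/2) r_{n,+}^i(x) [ e^{n(f(x + 2e_i/n) − f(x))} − 1 ] + ((1+x_i)/2) r_{n,-}^i(x) [ e^{n(f(x − 2e_i/n) − f(x))} − 1 ] } on the grid E_n, and Hf(x) = ∑_i { v₊^i(x)(e^{2∂_i f(x)} − 1) + v₋^i(x)(e^{−2∂_i f(x)} − 1) }. If sup_{x∈E_n} ∑_i |((1−x_i)/2) r_{n,+}^i(x) − v₊^i(x)| + |((1+x_i)/2) r_{n,-}^i(x) − v₋^i(x)| → 0, then for every f ∈ C¹(E), sup_{x ∈ E_n} |H_n f(x) − Hf(x)| → 0 as n → ∞. -/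
open Real

/-! A C¹ function is uniformly differentiable on a compact set: its derivative is uniformly
continuous near the set, and the mean value inequality controls the remainder. Hence, uniformly on
the grids, `n (f (x ± 2 e_i / n) - f x) → ± 2 ∂_i f x`. Each summand of `H_n f - H f` is then
`(a - v)(e^b - 1) + v (e^A - e^b) + (a - v)(e^A - e^b)`, where `a - v → 0` and `A - b → 0`
uniformly, while `v` and `b` are bounded on `[-1,1]^d` by continuity. -/

open Filter Topology Asymptotics Metric

/-- Uniform convergence on the varying sets `S n` is convergence along this filter. -/
def gridAtTop {X : Type*} (S : ℕ → Set X) : Filter (ℕ × X) :=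
  comap Prod.fst atTop ⊓ 𝓟 {p | p.2 ∈ S p.1}

section gridAtTop

variable {X : Type*} {S : ℕ → Set X}

theorem eventually_gridAtTop {P : ℕ × X → Prop} :
    (∀ᶠ p in gridAtTop S, P p) ↔ ∃ N, ∀ n ≥ N, ∀ x ∈ S n, P (n, x) := by
  simp only [gridAtTop, eventually_inf_principal, eventually_comap, eventually_atTop]
  constructor
  · rintro ⟨N, hN⟩
    exact ⟨N, fun n hn x hx => hN n hn (n, x) rfl hx⟩
  · rintro ⟨N, hN⟩
    exact ⟨N, fun n hn ⟨m, x⟩ hm hx => by subst hm; exact hN m hn x hx⟩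

theorem tendsto_gridAtTop_iff {Y : Type*} [PseudoMetricSpace Y] {F : ℕ × X → Y} {y : Y} :
    Tendsto F (gridAtTop S) (𝓝 y) ↔
      ∀ ε > 0, ∃ N, ∀ n ≥ N, ∀ x ∈ S n, dist (F (n, x)) y < ε := by
  simp only [Metric.tendsto_nhds, eventually_gridAtTop]

theorem tendsto_gridAtTop_zero_of_abs_le {F : ℕ × X → ℝ} {G : ℕ → X → ℝ}
    (hG : ∀ ε > 0, ∃ N, ∀ n ≥ N, ∀ x ∈ S n, G n x < ε) (hFG : ∀ n x, |F (n, x)| ≤ G n x) :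
    Tendsto F (gridAtTop S) (𝓝 0) :=
  tendsto_gridAtTop_iff.2 fun ε hε => (hG ε hε).imp fun _ hN n hn x hx => by
    simpa only [Real.dist_0_eq_abs] using (hFG n x).trans_lt (hN n hn x hx)

theorem tendsto_fst_gridAtTop : Tendsto Prod.fst (gridAtTop S) atTop :=
  tendsto_comap.mono_left inf_le_left

theorem eventually_mem_gridAtTop {K : Set X} (hS : ∀ n, S n ⊆ K) :
    ∀ᶠ p in gridAtTop S, p.2 ∈ K :=
  eventually_gridAtTop.2 ⟨0, fun n _ _ hx => hS n hx⟩

end gridAtTop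

theorem mem_closedBall_of_forall_eq_grid {d n : ℕ} {x : Fin d → ℝ}
    (hx : ∀ i, ∃ m : ℕ, m ≤ n ∧ x i = -1 + 2 * (m : ℝ) / n) : x ∈ closedBall 0 1 := by
  rw [mem_closedBall_zero_iff, pi_norm_le_iff_of_nonneg zero_le_one]
  intro i
  obtain ⟨m, hm, hxi⟩ := hx i
  have h0 : 0 ≤ (m : ℝ) / n := by positivity
  have h1 : (m : ℝ) / n ≤ 1 := div_le_one_of_le₀ (by exact_mod_cast hm) (Nat.cast_nonneg _)
  rw [hxi, Real.norm_eq_abs, abs_le, mul_div_assoc]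
  constructor <;> linarith

theorem IsCompact.isBoundedUnder_norm_comp {α X Y : Type*} [TopologicalSpace X]
    [SeminormedAddCommGroup Y] {K : Set X} (hK : IsCompact K) {g : X → Y} (hg : ContinuousOn g K)
    {l : Filter α} {φ : α → X} (hφ : ∀ᶠ a in l, φ a ∈ K) :
    IsBoundedUnder (· ≤ ·) l (fun a => ‖g (φ a)‖) := by
  obtain ⟨C, hC⟩ := hK.exists_bound_of_continuousOn hg
  exact isBoundedUnder_of_eventually_le (hφ.mono fun a ha => hC _ ha)

section UniformDifferentiability

variable {E F : Type*} [NormedAddCommGroup E] [NormedSpace ℝ E] [NormedAddCommGroup F]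
  [NormedSpace ℝ F] {f : E → F} {K : Set E}

theorem ContDiff.isLittleO_sub_fderiv_uniformOn (hf : ContDiff ℝ 1 f) (hK : IsCompact K) :
    (fun p : E × E => f (p.2 + p.1) - f p.2 - fderiv ℝ f p.2 p.1) =o[𝓝 0 ×ˢ 𝓟 K] Prod.fst := by
  refine IsLittleO.of_bound fun ε hε => ?_
  obtain ⟨δ, hδ, hclose⟩ := Metric.mem_uniformity_dist.1
    (hK.uniformContinuousAt_of_continuousAt (fderiv ℝ f)
      (fun x _ => (hf.continuous_fderiv one_ne_zero).continuousAt) (Metric.dist_mem_uniformity hε))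
  filter_upwards [prod_mem_prod (ball_mem_nhds 0 hδ) (mem_principal_self K)]
    with ⟨h, x⟩ ⟨hh, hx⟩
  have hxh : x + h ∈ ball x δ := by simpa using hh
  simpa using (convex_ball x δ).norm_image_sub_le_of_norm_fderiv_le'
    (fun z _ => (hf.differentiable one_ne_zero) z)
    (fun z hz => by rw [← dist_eq_norm, dist_comm]; exact (hclose (mem_ball'.1 hz) hx).le)
    (mem_ball_self hδ) hxh

theorem ContDiff.tendsto_natCast_smul_sub_fderiv (hf : ContDiff ℝ 1 f) (hK : IsCompact K) (v : E)
    {l : Filter (ℕ × E)} (hl : Tendsto Prod.fst l atTop) (hlK : ∀ᶠ p in l, p.2 ∈ K) :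
    Tendsto (fun p : ℕ × E => (p.1 : ℝ) • (f (p.2 + (p.1 : ℝ)⁻¹ • v) - f p.2) - fderiv ℝ f p.2 v)
      l (𝓝 0) := by
  have hstep : Tendsto (fun p : ℕ × E => ((p.1 : ℝ)⁻¹ • v, p.2)) l (𝓝 0 ×ˢ 𝓟 K) := by
    refine Tendsto.prodMk ?_ (tendsto_principal.2 hlK)
    have hinv := tendsto_inv_atTop_zero.comp ((tendsto_natCast_atTop_atTop (R := ℝ)).comp hl)
    simpa using hinv.smul_const v
  have ho := (isBigO_refl (fun p : ℕ × E => (p.1 : ℝ)) l).smul_isLittleO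
    ((hf.isLittleO_sub_fderiv_uniformOn hK).comp_tendsto hstep)
  have hv : (fun p : ℕ × E => (p.1 : ℝ) • ((p.1 : ℝ)⁻¹ • v)) =ᶠ[l] fun _ => v := by
    filter_upwards [hl.eventually_ne_atTop 0] with p hp
    rw [smul_smul, mul_inv_cancel₀ ((Nat.cast_ne_zero (R := ℝ)).2 hp), one_smul]
  refine (isLittleO_one_iff ℝ).1 (ho.trans_isBigO ?_) |>.congr' ?_
  · exact (isBigO_const_const v one_ne_zero l).congr' hv.symm EventuallyEq.rfl
  · filter_upwards [hl.eventually_ne_atTop 0] with p hp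
    simp [smul_sub, smul_smul, mul_inv_cancel₀ ((Nat.cast_ne_zero (R := ℝ)).2 hp)]

end UniformDifferentiability

theorem tendsto_mul_exp_sub_one_sub_mul_exp_sub_one {α : Type*} {l : Filter α}
    {a v A b : α → ℝ} (ha : Tendsto (fun x => a x - v x) l (𝓝 0))
    (hA : Tendsto (fun x => A x - b x) l (𝓝 0))
    (hv : IsBoundedUnder (· ≤ ·) l (fun x => ‖v x‖)) (hb : IsBoundedUnder (· ≤ ·) l b) :
    Tendsto (fun x => a x * (exp (A x) - 1) - v x * (exp (b x) - 1)) l (𝓝 0) := by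
  obtain ⟨B, hB⟩ := hb
  have hexp : IsBoundedUnder (· ≤ ·) l (fun x => ‖exp (b x)‖) :=
    isBoundedUnder_of_eventually_le (a := exp B) <| (eventually_map.1 hB).mono fun x hx => by
      rw [norm_of_nonneg (exp_pos _).le]; exact exp_le_exp.2 hx
  have hexp_sub_one : IsBoundedUnder (· ≤ ·) l (fun x => ‖exp (b x) - 1‖) := by
    obtain ⟨C, hC⟩ := hexp
    exact isBoundedUnder_of_eventually_le (a := C + 1) <| (eventually_map.1 hC).mono fun x hx =>
      (norm_sub_le _ _).trans (by simpa using hx)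
  have hdiff : Tendsto (fun x => exp (A x) - exp (b x)) l (𝓝 0) := by
    have h : Tendsto (fun x => exp (A x - b x) - 1) l (𝓝 0) := by
      simpa using ((continuous_exp.tendsto 0).comp hA).sub_const 1
    refine (isBoundedUnder_le_mul_tendsto_zero hexp h).congr fun x => ?_
    rw [mul_sub, ← exp_add, add_sub_cancel, mul_one]
  have key : ∀ x, a x * (exp (A x) - 1) - v x * (exp (b x) - 1) =
      (a x - v x) * (exp (b x) - 1) + v x * (exp (A x) - exp (b x)) +
        (a x - v x) * (exp (A x) - exp (b x)) := fun x => by ring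
  simpa only [key, add_zero, mul_zero] using ((ha.zero_mul_isBoundedUnder_le hexp_sub_one).add
    (isBoundedUnder_le_mul_tendsto_zero hv hdiff)).add (ha.mul hdiff)

theorem ContDiff.tendsto_mul_exp_natCast_mul_sub_sub {E : Type*} [NormedAddCommGroup E]
    [NormedSpace ℝ E] {f : E → ℝ} (hf : ContDiff ℝ 1 f) {K : Set E} (hK : IsCompact K) (u : E)
    (c : ℝ) {l : Filter (ℕ × E)} (hl : Tendsto Prod.fst l atTop) (hlK : ∀ᶠ p in l, p.2 ∈ K)
    {a v : ℕ × E → ℝ} (ha : Tendsto (fun p => a p - v p) l (𝓝 0))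
    (hv : IsBoundedUnder (· ≤ ·) l (fun p => ‖v p‖)) :
    Tendsto (fun p : ℕ × E => a p * (Real.exp ((p.1 : ℝ) * (f (p.2 + (c / p.1) • u) - f p.2)) - 1) -
      v p * (Real.exp (c * fderiv ℝ f p.2 u) - 1)) l (𝓝 0) := by
  have hquot := hf.tendsto_natCast_smul_sub_fderiv hK (c • u) hl hlK
  simp only [map_smul, smul_eq_mul, smul_smul, inv_mul_eq_div] at hquot
  have hderiv : IsBoundedUnder (· ≤ ·) l (fun p => ‖c * fderiv ℝ f p.2 u‖) :=
    hK.isBoundedUnder_norm_comp (Continuous.continuousOn <|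
      continuous_const.mul ((hf.continuous_fderiv one_ne_zero).clm_apply continuous_const)) hlK
  exact tendsto_mul_exp_sub_one_sub_mul_exp_sub_one ha hquot hv
    (hderiv.mono_le (.of_forall fun p => le_abs_self _))

theorem stmt_19_general {d : ℕ}
    (En : ℕ → Set (Fin d → ℝ))
    (hEn : ∀ n, En n = {x : Fin d → ℝ |
      ∀ i, ∃ m : ℕ, m ≤ n ∧ x i = -1 + 2 * (m : ℝ) / n})
    (rp rm : ℕ → Fin d → (Fin d → ℝ) → ℝ)
    (vp vm : Fin d → (Fin d → ℝ) → ℝ)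
    (hvpc : ∀ i, Continuous (vp i)) (hvmc : ∀ i, Continuous (vm i))
    -- uniform convergence of the rates:
    (hconv : ∀ ε > (0:ℝ), ∃ N : ℕ, ∀ n ≥ N, ∀ x ∈ En n,
      (∑ i, (|(1 - x i) / 2 * rp n i x - vp i x| +
             |(1 + x i) / 2 * rm n i x - vm i x|)) < ε)
    (f : (Fin d → ℝ) → ℝ) (hf : ContDiff ℝ 1 f)
    (Hn : ℕ → (Fin d → ℝ) → ℝ)
    (hHn : ∀ n x, Hn n x = ∑ i,
      ((1 - x i) / 2 * rp n i x *
        (exp ((n : ℝ) * (f (x + (2 / n : ℝ) • (Pi.single i 1 : Fin d → ℝ)) - f x)) - 1) +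
       (1 + x i) / 2 * rm n i x *
        (exp ((n : ℝ) * (f (x - (2 / n : ℝ) • (Pi.single i 1 : Fin d → ℝ)) - f x)) - 1)))
    (Hf : (Fin d → ℝ) → ℝ)
    (hHf : ∀ x, Hf x = ∑ i,
      (vp i x * (exp (2 * fderiv ℝ f x (Pi.single i 1)) - 1) +
       vm i x * (exp (-(2 * fderiv ℝ f x (Pi.single i 1))) - 1))) :
    ∀ ε > (0:ℝ), ∃ N : ℕ, ∀ n ≥ N, ∀ x ∈ En n, |Hn n x - Hf x| < ε := by
  suffices h : Tendsto (fun p : ℕ × (Fin d → ℝ) => Hn p.1 p.2 - Hf p.2) (gridAtTop En) (𝓝 0) by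
    simpa [Real.dist_eq] using tendsto_gridAtTop_iff.1 h
  have hK : ∀ᶠ p in gridAtTop En, p.2 ∈ closedBall (0 : Fin d → ℝ) 1 :=
    eventually_mem_gridAtTop fun n x hx => mem_closedBall_of_forall_eq_grid (hEn n ▸ hx)
  have hle : ∀ (a b : Fin d → ℝ) i, |a i| + |b i| ≤ ∑ j, (|a j| + |b j|) := fun a b i =>
    Finset.single_le_sum (f := fun j => |a j| + |b j|) (fun _ _ => by positivity)
      (Finset.mem_univ i)
  have hrate_p : ∀ i, Tendsto (fun p : ℕ × (Fin d → ℝ) =>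
      (1 - p.2 i) / 2 * rp p.1 i p.2 - vp i p.2) (gridAtTop En) (𝓝 0) := fun i =>
    tendsto_gridAtTop_zero_of_abs_le hconv fun n x =>
      (hle _ _ i).trans' (le_add_of_nonneg_right (abs_nonneg _))
  have hrate_m : ∀ i, Tendsto (fun p : ℕ × (Fin d → ℝ) =>
      (1 + p.2 i) / 2 * rm p.1 i p.2 - vm i p.2) (gridAtTop En) (𝓝 0) := fun i =>
    tendsto_gridAtTop_zero_of_abs_le hconv fun n x =>
      (hle _ _ i).trans' (le_add_of_nonneg_left (abs_nonneg _))
  have hbdd : ∀ g : (Fin d → ℝ) → ℝ, Continuous g →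
      IsBoundedUnder (· ≤ ·) (gridAtTop En) (fun p => ‖g p.2‖) :=
    fun g hg => (isCompact_closedBall _ _).isBoundedUnder_norm_comp hg.continuousOn hK
  have hdir := hf.tendsto_mul_exp_natCast_mul_sub_sub (isCompact_closedBall 0 1)
  simpa [hHn, hHf, ← Finset.sum_sub_distrib, add_sub_add_comm, smul_neg, ← sub_eq_add_neg]
    using tendsto_finsetSum Finset.univ fun i _ =>
      (hdir (Pi.single i 1) 2 tendsto_fst_gridAtTop hK (hrate_p i) (hbdd _ (hvpc i))).add
        (hdir (-Pi.single i 1) 2 tendsto_fst_gridAtTop hK (hrate_m i) (hbdd _ (hvmc i)))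

/-- Convergence of the nonlinear generators for the d-dimensional Ehrenfest model:
if the rates satisfy the uniform convergence
`sup_{x ∈ E_n} ∑_i |((1−x_i)/2) r_{n,+}^i(x) − v₊^i(x)| + |((1+x_i)/2) r_{n,-}^i(x) − v₋^i(x)| → 0`,
then for every `f ∈ C¹(E)`, `sup_{x ∈ E_n} |H_n f(x) − Hf(x)| → 0`, where
`H_n f = (1/n) e^{-nf} A_n e^{nf}` and `Hf(x) = ∑_i v₊^i(x)(e^{2∂_i f} − 1) + v₋^i(x)(e^{−2∂_i f} − 1)`. -/
theorem stmt_19 {d : ℕ}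
    (En : ℕ → Set (Fin d → ℝ))
    (hEn : ∀ n, En n = {x : Fin d → ℝ |
      ∀ i, ∃ m : ℕ, m ≤ n ∧ x i = -1 + 2 * (m : ℝ) / n})
    (rp rm : ℕ → Fin d → (Fin d → ℝ) → ℝ)
    (hrp0 : ∀ n i, ∀ x ∈ En n, 0 ≤ rp n i x) (hrm0 : ∀ n i, ∀ x ∈ En n, 0 ≤ rm n i x)
    (vp vm : Fin d → (Fin d → ℝ) → ℝ)
    (hvpc : ∀ i, Continuous (vp i)) (hvmc : ∀ i, Continuous (vm i))
    (hvp0 : ∀ i x, 0 ≤ vp i x) (hvm0 : ∀ i x, 0 ≤ vm i x)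
    -- uniform convergence of the rates:
    (hconv : ∀ ε > (0:ℝ), ∃ N : ℕ, ∀ n ≥ N, ∀ x ∈ En n,
      (∑ i, (|(1 - x i) / 2 * rp n i x - vp i x| +
             |(1 + x i) / 2 * rm n i x - vm i x|)) < ε)
    (f : (Fin d → ℝ) → ℝ) (hf : ContDiff ℝ 1 f)
    (Hn : ℕ → (Fin d → ℝ) → ℝ)
    (hHn : ∀ n x, Hn n x = ∑ i,
      ((1 - x i) / 2 * rp n i x *
        (exp ((n : ℝ) * (f (x + (2 / n : ℝ) • (Pi.single i 1 : Fin d → ℝ)) - f x)) - 1) +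
       (1 + x i) / 2 * rm n i x *
        (exp ((n : ℝ) * (f (x - (2 / n : ℝ) • (Pi.single i 1 : Fin d → ℝ)) - f x)) - 1)))
    (Hf : (Fin d → ℝ) → ℝ)
    (hHf : ∀ x, Hf x = ∑ i,
      (vp i x * (exp (2 * fderiv ℝ f x (Pi.single i 1)) - 1) +
       vm i x * (exp (-(2 * fderiv ℝ f x (Pi.single i 1))) - 1))) :
    ∀ ε > (0:ℝ), ∃ N : ℕ, ∀ n ≥ N, ∀ x ∈ En n, |Hn n x - Hf x| < ε :=
  stmt_19_general En hEn rp rm vp vm hvpc hvmc hconv f hf Hn hHn Hf hHf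
end
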